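/- arXiv:2307.15543 — 7 statements merged into one kernel-verified Lean document; each statement's English description precedes it below -/
import Mathlib

section
/- Every oracle-computable functional is modulus-continuous: if F : (Q → A → Prop) → (I → O → Prop) is computable and F R i o holds, then there exists a list qs : List Q (a modulus of continuity) such that every q ∈ qs has some a with R q a, and for every oracle R' : Q → A → Prop with (∀ q ∈ qs, ∀ a, R q a ↔ R' q a) we also have F R' i o. -/
/-- The interrogation relation `σ;R ⊢ qs;ans`. -/
inductive Interrogation {Q A O : Type*} (σ : List A → Part (Q ⊕ O)) (R : Q → A → Prop) :
    List Q → List A → Prop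
  | nil : Interrogation σ R [] []
  | step {qs : List Q} {ans : List A} {q : Q} {a : A} :
      Interrogation σ R qs ans → Sum.inl q ∈ σ ans → R q a →
      Interrogation σ R (qs ++ [q]) (ans ++ [a])

/-- A functional is oracle-computable if it is given by a computation tree. -/
def OracleComputable {Q A I O : Type*} (F : (Q → A → Prop) → I → O → Prop) : Prop :=
  ∃ τ : I → List A → Part (Q ⊕ O),
    ∀ R i o, F R i o ↔ ∃ qs ans, Interrogation (τ i) R qs ans ∧ Sum.inr o ∈ τ i ans

/-- The characteristic relation of a predicate. -/
def charRel {X : Type*} (p : X → Prop) : X → Bool → Prop :=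
  fun x b => if b then p x else ¬ p x

/-- Turing reducibility. -/
def TuringRed {X Y : Type*} (p : X → Prop) (q : Y → Prop) : Prop :=
  ∃ F : (Y → Bool → Prop) → X → Bool → Prop,
    OracleComputable F ∧ ∀ x b, charRel p x b ↔ F (charRel q) x b

/-- Oracle semi-decidability of `p` relative to `q`. -/
def OracleSemiDec {X Y : Type*} (q : Y → Prop) (p : X → Prop) : Prop :=
  ∃ F : (Y → Bool → Prop) → X → Unit → Prop,
    OracleComputable F ∧ ∀ x, p x ↔ F (charRel q) x ()

theorem computable_to_modulus_continuous {Q A I O : Type*}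
    (F : (Q → A → Prop) → I → O → Prop) (hF : OracleComputable F)
    (R : Q → A → Prop) (i : I) (o : O) (h : F R i o) :
    ∃ qs : List Q, (∀ q ∈ qs, ∃ a, R q a) ∧
      ∀ R' : Q → A → Prop, (∀ q ∈ qs, ∀ a, R q a ↔ R' q a) → F R' i o := by
  obtain ⟨τ, hτ⟩ := hF
  obtain ⟨qs, ans, hint, hout⟩ := (hτ R i o).mp h
  refine ⟨qs, ?_, ?_⟩
  · clear h hout
    induction hint with
    | nil => simp
    | step h1 h2 h3 ih =>
      intro q hq
      rcases List.mem_append.mp hq with hq | hq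
      · exact ih q hq
      · simp at hq; subst hq; exact ⟨_, h3⟩
  · intro R' hR'
    refine (hτ R' i o).mpr ⟨qs, ans, ?_, hout⟩
    clear h hout
    induction hint with
    | nil => exact Interrogation.nil
    | step h1 h2 h3 ih =>
      refine Interrogation.step (ih fun q hq => hR' q (by simp [hq])) h2 ?_
      exact (hR' _ (by simp) _).mp h3
end

section
/- There is a modulus-continuous functional that is not oracle-computable: for inhabited types I and O, the functional F : (ℕ → Bool → Prop) → (I → O → Prop) defined by F R i o := ∃ q, R q true is modulus-continuous, but there is no tree τ : I → List Bool ⇀ (ℕ ⊕ O) witnessing that F is computable. -/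
theorem modulus_continuous_not_computable (I O : Type*) [Inhabited I] [Inhabited O] :
    (∀ (R : ℕ → Bool → Prop) (i : I) (o : O), (∃ q, R q true) →
      ∃ qs : List ℕ, (∀ q ∈ qs, ∃ a, R q a) ∧
        ∀ R' : ℕ → Bool → Prop, (∀ q ∈ qs, ∀ a, R q a ↔ R' q a) → (∃ q, R' q true)) ∧
    ¬ OracleComputable (fun (R : ℕ → Bool → Prop) (_ : I) (_ : O) => ∃ q, R q true) := by
  classical
  constructor
  · rintro R i o ⟨q, hq⟩
    refine ⟨[q], fun q' hq' => ⟨true, ?_⟩, fun R' hR' => ⟨q, (hR' q (by simp) true).mp hq⟩⟩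
    rw [List.mem_singleton.mp hq']; exact hq
  · rintro ⟨τ, hτ⟩
    set σ := τ (default : I) with hσ
    have hq₀ : ∃ q₀ : ℕ, ¬ Sum.inl q₀ ∈ σ ([] : List Bool) := by
      by_cases h : (σ []).Dom
      · cases hv : (σ []).get h with
        | inl q =>
          refine ⟨q + 1, fun hm => ?_⟩
          have := Part.get_eq_of_mem hm h
          rw [hv] at this
          simp at this
        | inr o =>
          refine ⟨0, fun hm => ?_⟩
          have := Part.get_eq_of_mem hm h
          rw [hv] at this
          simp at this
      · exact ⟨0, fun hm => h (Part.dom_iff_mem.mpr ⟨_, hm⟩)⟩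
    obtain ⟨q₀, hq₀⟩ := hq₀
    obtain ⟨qs, ans, hint, hout⟩ :=
      (hτ (fun q a => q = q₀ ∧ a = true) default default).mp ⟨q₀, rfl, rfl⟩
    have hans : ans = [] := by
      clear hout
      induction hint with
      | nil => rfl
      | step h1 h2 h3 ih =>
        rw [ih] at h2
        exact absurd (h3.1 ▸ h2) hq₀
    rw [hans] at hout
    have : ∃ q : ℕ, (fun (_ : ℕ) (_ : Bool) => False) q true :=
      (hτ (fun _ _ => False) default default).mpr ⟨[], [], Interrogation.nil, hout⟩
    exact this.elim fun _ h => h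
end

section
/- Computable functionals are closed under binding: if F₁ : (Q → A → Prop) → (I → O' → Prop) and F₂ : (Q → A → Prop) → ((I × O') → O → Prop) are both computable, then the functional mapping R : Q → A → Prop to the relation λ i o, ∃ o' : O', F₁ R i o' ∧ F₂ R (i, o') o of type I → O → Prop is computable. -/
section SeqAux

variable {Q A O O' : Type*}

/-- Sequencing of trees: run `τ₁` on the prefix of the answers until it yields an
output `o'`, then run `τ₂ o'` on the remaining answers. -/
def seqGo (τ₁ : List A → Part (Q ⊕ O')) (τ₂ : O' → List A → Part (Q ⊕ O)) :
    List A → List A → Part (Q ⊕ O)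
  | pre, [] => (τ₁ pre).bind fun r =>
      match r with
      | .inl q => Part.some (.inl q)
      | .inr o' => τ₂ o' []
  | pre, a :: suf => (τ₁ pre).bind fun r =>
      match r with
      | .inl _ => seqGo τ₁ τ₂ (pre ++ [a]) suf
      | .inr o' => τ₂ o' (a :: suf)

variable {τ₁ : List A → Part (Q ⊕ O')} {τ₂ : O' → List A → Part (Q ⊕ O)}

theorem seqGo_inr {pre : List A} {o' : O'} (h : Sum.inr o' ∈ τ₁ pre) (suf : List A) :
    seqGo τ₁ τ₂ pre suf = τ₂ o' suf := by
  have h' : τ₁ pre = Part.some (Sum.inr o') := Part.eq_some_iff.mpr h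
  cases suf <;> simp [seqGo, h']

theorem seqGo_inl_nil {pre : List A} {q : Q} (h : Sum.inl q ∈ τ₁ pre) :
    seqGo τ₁ τ₂ pre [] = Part.some (Sum.inl q) := by
  have h' : τ₁ pre = Part.some (Sum.inl q) := Part.eq_some_iff.mpr h
  simp [seqGo, h']

theorem seqGo_inl_cons {pre : List A} {q : Q} {a : A} {suf : List A}
    (h : Sum.inl q ∈ τ₁ pre) :
    seqGo τ₁ τ₂ pre (a :: suf) = seqGo τ₁ τ₂ (pre ++ [a]) suf := by
  have h' : τ₁ pre = Part.some (Sum.inl q) := Part.eq_some_iff.mpr h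
  simp [seqGo, h']

theorem seqGo_shift {R : Q → A → Prop} {qs : List Q} {ans : List A}
    (h : Interrogation τ₁ R qs ans) (suf : List A) :
    seqGo τ₁ τ₂ [] (ans ++ suf) = seqGo τ₁ τ₂ ans suf := by
  induction h generalizing suf with
  | nil => simp
  | @step qs ans q a h hq hr ih =>
    rw [List.append_assoc, ih]
    exact seqGo_inl_cons hq

theorem seqGo_interrogation₁ {R : Q → A → Prop} {qs : List Q} {ans : List A}
    (h : Interrogation τ₁ R qs ans) :
    Interrogation (seqGo τ₁ τ₂ []) R qs ans := by
  induction h with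
  | nil => exact .nil
  | @step qs ans q a h hq hr ih =>
    refine ih.step ?_ hr
    have h1 : seqGo τ₁ τ₂ [] (ans ++ []) = seqGo τ₁ τ₂ ans [] := seqGo_shift h []
    rw [List.append_nil] at h1
    rw [h1, seqGo_inl_nil hq]
    exact Part.mem_some _

theorem seqGo_interrogation_append {R : Q → A → Prop} {qs₁ qs₂ : List Q}
    {ans₁ ans₂ : List A} {o' : O'}
    (h1 : Interrogation τ₁ R qs₁ ans₁) (ho' : Sum.inr o' ∈ τ₁ ans₁)
    (h2 : Interrogation (τ₂ o') R qs₂ ans₂) :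
    Interrogation (seqGo τ₁ τ₂ []) R (qs₁ ++ qs₂) (ans₁ ++ ans₂) := by
  induction h2 with
  | nil => simpa using seqGo_interrogation₁ h1
  | @step qs₂ ans₂ q a h hq hr ih =>
    rw [← List.append_assoc, ← List.append_assoc]
    refine ih.step ?_ hr
    rw [seqGo_shift h1 ans₂, seqGo_inr ho' ans₂]
    exact hq

theorem seqGo_decomp {R : Q → A → Prop} {qs : List Q} {ans : List A}
    (h : Interrogation (seqGo τ₁ τ₂ []) R qs ans) :
    Interrogation τ₁ R qs ans ∨
    ∃ (o' : O') (qs₁ qs₂ : List Q) (ans₁ ans₂ : List A),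
      qs = qs₁ ++ qs₂ ∧ ans = ans₁ ++ ans₂ ∧
      Interrogation τ₁ R qs₁ ans₁ ∧ Sum.inr o' ∈ τ₁ ans₁ ∧
      Interrogation (τ₂ o') R qs₂ ans₂ := by
  induction h with
  | nil => exact Or.inl .nil
  | @step qs ans q a h hq hr ih =>
    rcases ih with h1 | ⟨o', qs₁, qs₂, ans₁, ans₂, hqs, hans, h1, ho', h2⟩
    · have heq : seqGo τ₁ τ₂ [] (ans ++ []) = seqGo τ₁ τ₂ ans [] := seqGo_shift h1 []
      rw [List.append_nil] at heq
      rw [heq] at hq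
      rw [seqGo] at hq
      rcases Part.mem_bind_iff.mp hq with ⟨r, hrmem, hr2⟩
      match r with
      | .inl q₀ =>
        simp only [Part.mem_some_iff, Sum.inl.injEq] at hr2
        subst hr2
        exact Or.inl (h1.step hrmem hr)
      | .inr o' =>
        refine Or.inr ⟨o', qs, [q], ans, [a], rfl, rfl, h1, hrmem, ?_⟩
        simpa using Interrogation.nil.step hr2 hr
    · subst hqs hans
      rw [seqGo_shift h1 ans₂, seqGo_inr ho' ans₂] at hq
      exact Or.inr ⟨o', qs₁, qs₂ ++ [q], ans₁, ans₂ ++ [a],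
        List.append_assoc .., List.append_assoc .., h1, ho',
        h2.step hq hr⟩

end SeqAux

theorem computable_bind {Q A I O O' : Type*}
    (F₁ : (Q → A → Prop) → I → O' → Prop)
    (F₂ : (Q → A → Prop) → (I × O') → O → Prop)
    (h₁ : OracleComputable F₁) (h₂ : OracleComputable F₂) :
    OracleComputable (fun (R : Q → A → Prop) (i : I) (o : O) =>
      ∃ o' : O', F₁ R i o' ∧ F₂ R (i, o') o) := by
  obtain ⟨τ₁, H₁⟩ := h₁
  obtain ⟨τ₂, H₂⟩ := h₂
  refine ⟨fun i => seqGo (τ₁ i) (fun o' => τ₂ (i, o')) [], fun R i o => ?_⟩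
  constructor
  · rintro ⟨o', hF1, hF2⟩
    obtain ⟨qs₁, ans₁, h1, hout1⟩ := (H₁ R i o').mp hF1
    obtain ⟨qs₂, ans₂, h2, hout2⟩ := (H₂ R (i, o') o).mp hF2
    refine ⟨qs₁ ++ qs₂, ans₁ ++ ans₂, seqGo_interrogation_append h1 hout1 h2, ?_⟩
    show Sum.inr o ∈ seqGo (τ₁ i) (fun o' => τ₂ (i, o')) [] (ans₁ ++ ans₂)
    rw [seqGo_shift h1 ans₂, seqGo_inr hout1 ans₂]
    exact hout2
  · rintro ⟨qs, ans, hint, hout⟩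
    rcases seqGo_decomp hint with h1 | ⟨o', qs₁, qs₂, ans₁, ans₂, hqs, hans, h1, ho', h2⟩
    · have heq : seqGo (τ₁ i) (fun o' => τ₂ (i, o')) [] (ans ++ []) =
          seqGo (τ₁ i) (fun o' => τ₂ (i, o')) ans [] := seqGo_shift h1 []
      rw [List.append_nil] at heq
      replace hout : Sum.inr o ∈ seqGo (τ₁ i) (fun o' => τ₂ (i, o')) [] ans := hout
      rw [heq, seqGo] at hout
      rcases Part.mem_bind_iff.mp hout with ⟨r, hrmem, hr2⟩
      match r with
      | .inl q₀ => simp at hr2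
      | .inr o' =>
        exact ⟨o', (H₁ R i o').mpr ⟨qs, ans, h1, hrmem⟩,
          (H₂ R (i, o') o).mpr ⟨[], [], .nil, hr2⟩⟩
    · subst hqs hans
      replace hout : Sum.inr o ∈ seqGo (τ₁ i) (fun o' => τ₂ (i, o')) [] (ans₁ ++ ans₂) := hout
      rw [seqGo_shift h1 ans₂, seqGo_inr ho' ans₂] at hout
      exact ⟨o', (H₁ R i o').mpr ⟨qs₁, ans₁, h1, ho'⟩,
        (H₂ R (i, o') o).mpr ⟨qs₂, ans₂, h2, hout⟩⟩
end

section
/- Computable functionals are closed under composition: if F₁ maps relations R : Q → A → Prop to relations X → Y → Prop and F₂ maps relations R : X → Y → Prop to relations I → O → Prop, and both F₁ and F₂ are computable, then the functional mapping R : Q → A → Prop to the relation λ i o, F₂ (F₁ R) i o of type I → O → Prop is computable. -/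
namespace CompAux

variable {Q A X Y I O : Type*}

/-- One step of the dialogue simulation. -/
inductive Step (τ₁ : X → List A → Part (Q ⊕ Y)) (τ₂ : I → List Y → Part (X ⊕ O)) (i : I) :
    List Y × Option (X × List A) → List Y × Option (X × List A) → Prop
  | ask {ys : List Y} {x : X} :
      Sum.inl x ∈ τ₂ i ys → Step τ₁ τ₂ i (ys, none) (ys, some (x, []))
  | ret {ys : List Y} {x : X} {as : List A} {y : Y} :
      Sum.inr y ∈ τ₁ x as → Step τ₁ τ₂ i (ys, some (x, as)) (ys ++ [y], none)

def Reach (τ₁ : X → List A → Part (Q ⊕ Y)) (τ₂ : I → List Y → Part (X ⊕ O)) (i : I) :=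
  Relation.ReflTransGen (Step τ₁ τ₂ i)

/-- States reachable after consuming a list of oracle answers. -/
inductive After (τ₁ : X → List A → Part (Q ⊕ Y)) (τ₂ : I → List Y → Part (X ⊕ O)) (i : I) :
    List A → List Y × Option (X × List A) → Prop
  | start {s} : Reach τ₁ τ₂ i ([], none) s → After τ₁ τ₂ i [] s
  | step {ans a s ys x as q} : After τ₁ τ₂ i ans (ys, some (x, as)) → Sum.inl q ∈ τ₁ x as →
      Reach τ₁ τ₂ i (ys, some (x, as ++ [a])) s → After τ₁ τ₂ i (ans ++ [a]) s

def Final (τ₁ : X → List A → Part (Q ⊕ Y)) (τ₂ : I → List Y → Part (X ⊕ O)) (i : I)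
    (s : List Y × Option (X × List A)) (r : Q ⊕ O) : Prop :=
  (∃ ys o, s = (ys, (none : Option (X × List A))) ∧ r = Sum.inr o ∧ Sum.inr o ∈ τ₂ i ys) ∨
  (∃ ys x as q, s = (ys, some (x, as)) ∧ r = Sum.inl q ∧ Sum.inl q ∈ τ₁ x as)

variable {τ₁ : X → List A → Part (Q ⊕ Y)} {τ₂ : I → List Y → Part (X ⊕ O)} {i : I}

lemma step_det {s t₁ t₂} (h1 : Step τ₁ τ₂ i s t₁) (h2 : Step τ₁ τ₂ i s t₂) : t₁ = t₂ := by
  cases h1 with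
  | ask hx => cases h2 with
    | ask hx' => cases Part.mem_unique hx hx'; rfl
  | ret hy => cases h2 with
    | ret hy' => cases Part.mem_unique hy hy'; rfl

lemma final_no_step {s r t} (hf : Final τ₁ τ₂ i s r) (hs : Step τ₁ τ₂ i s t) : False := by
  rcases hf with ⟨ys, o, rfl, rfl, ho⟩ | ⟨ys, x, as, q, rfl, rfl, hq⟩
  · cases hs with
    | ask hx => simpa using Part.mem_unique ho hx
  · cases hs with
    | ret hy => simpa using Part.mem_unique hq hy

lemma reach_final {s r t} (hf : Final τ₁ τ₂ i s r) (h : Reach τ₁ τ₂ i s t) : t = s := by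
  rcases h.cases_head with rfl | ⟨c, hc, _⟩
  · rfl
  · exact absurd hc (fun hc => final_no_step hf hc)

lemma reach_comparable {s t₁ t₂} (h1 : Reach τ₁ τ₂ i s t₁) :
    Reach τ₁ τ₂ i s t₂ → Reach τ₁ τ₂ i t₁ t₂ ∨ Reach τ₁ τ₂ i t₂ t₁ := by
  induction h1 using Relation.ReflTransGen.head_induction_on with
  | refl => exact fun h2 => Or.inl h2
  | head h' h ih =>
    intro h2
    rcases h2.cases_head with rfl | ⟨c, hc, hrest⟩
    · exact Or.inr (h.head h')
    · cases step_det h' hc; exact ih hrest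

lemma after_reach {ans s s'} (h : After τ₁ τ₂ i ans s) (hr : Reach τ₁ τ₂ i s s') :
    After τ₁ τ₂ i ans s' := by
  cases h with
  | start h0 => exact After.start (h0.trans hr)
  | step h0 hq hr0 => exact After.step h0 hq (hr0.trans hr)

lemma after_inv {ans s} (h : After τ₁ τ₂ i ans s) :
    (ans = [] ∧ Reach τ₁ τ₂ i ([], none) s) ∨
    ∃ ans₀ a ys x as q, ans = ans₀ ++ [a] ∧ After τ₁ τ₂ i ans₀ (ys, some (x, as)) ∧
      Sum.inl q ∈ τ₁ x as ∧ Reach τ₁ τ₂ i (ys, some (x, as ++ [a])) s := by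
  cases h with
  | start h0 => exact Or.inl ⟨rfl, h0⟩
  | @step ans a s ys x as q h0 hq hr => exact Or.inr ⟨ans, a, ys, x, as, q, rfl, h0, hq, hr⟩

lemma after_comparable {ans s₁ s₂} (h1 : After τ₁ τ₂ i ans s₁) (h2 : After τ₁ τ₂ i ans s₂) :
    Reach τ₁ τ₂ i s₁ s₂ ∨ Reach τ₁ τ₂ i s₂ s₁ := by
  induction h1 generalizing s₂ with
  | start h0 =>
    rcases after_inv h2 with ⟨_, h0'⟩ | ⟨ans₀, a, ys, x, as, q, habs, _⟩
    · exact reach_comparable h0 h0'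
    · simp at habs
  | @step ans a s ys x as q h0 hq hr ih =>
    rcases after_inv h2 with ⟨habs, _⟩ | ⟨ans₀, a', ys', x', as', q', heq, h0', hq', hr'⟩
    · simp at habs
    · obtain ⟨rfl, ha⟩ := List.append_inj' heq rfl
      have ha' : a = a' := by simpa using ha
      subst ha'
      have hw : (ys, some (x, as)) = (ys', (some (x', as') : Option (X × List A))) := by
        have hf : Final τ₁ τ₂ i (ys, some (x, as)) (Sum.inl q) :=
          Or.inr ⟨ys, x, as, q, rfl, rfl, hq⟩
        have hf' : Final τ₁ τ₂ i (ys', some (x', as')) (Sum.inl q') :=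
          Or.inr ⟨ys', x', as', q', rfl, rfl, hq'⟩
        rcases ih h0' with h | h
        · exact (reach_final hf h).symm
        · exact reach_final hf' h
      obtain ⟨rfl, hx, has⟩ : ys = ys' ∧ x = x' ∧ as = as' := by
        simpa [Prod.ext_iff] using hw
      subst hx; subst has
      exact reach_comparable hr hr'

def evalRel (τ₁ : X → List A → Part (Q ⊕ Y)) (τ₂ : I → List Y → Part (X ⊕ O)) (i : I)
    (ans : List A) (r : Q ⊕ O) : Prop :=
  ∃ s, After τ₁ τ₂ i ans s ∧ Final τ₁ τ₂ i s r

lemma eval_det {ans r₁ r₂} (h1 : evalRel τ₁ τ₂ i ans r₁) (h2 : evalRel τ₁ τ₂ i ans r₂) :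
    r₁ = r₂ := by
  obtain ⟨s₁, ha1, hf1⟩ := h1
  obtain ⟨s₂, ha2, hf2⟩ := h2
  have hs : s₁ = s₂ := by
    rcases after_comparable ha1 ha2 with h | h
    · exact (reach_final hf1 h).symm
    · exact reach_final hf2 h
  subst hs
  rcases hf1 with ⟨ys, o, rfl, rfl, ho⟩ | ⟨ys, x, as, q, rfl, rfl, hq⟩ <;>
    rcases hf2 with ⟨ys', o', heq, rfl, ho'⟩ | ⟨ys', x', as', q', heq, rfl, hq'⟩
  · have hys : ys = ys' := by simpa [Prod.ext_iff] using heq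
    subst hys
    exact congrArg _ (by simpa using Part.mem_unique ho ho')
  · simp [Prod.ext_iff] at heq
  · simp [Prod.ext_iff] at heq
  · obtain ⟨rfl, hx, has⟩ : ys = ys' ∧ x = x' ∧ as = as' := by simpa [Prod.ext_iff] using heq
    subst hx; subst has
    exact congrArg _ (by simpa using Part.mem_unique hq hq')

noncomputable def tree (τ₁ : X → List A → Part (Q ⊕ Y)) (τ₂ : I → List Y → Part (X ⊕ O)) (i : I)
    (ans : List A) : Part (Q ⊕ O) :=
  ⟨∃ r, evalRel τ₁ τ₂ i ans r, fun h => h.choose⟩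

lemma mem_tree {ans r} : r ∈ tree τ₁ τ₂ i ans ↔ evalRel τ₁ τ₂ i ans r := by
  constructor
  · rintro ⟨h, rfl⟩; exact h.choose_spec
  · intro hr
    exact ⟨⟨r, hr⟩, eval_det (Exists.choose_spec ⟨r, hr⟩) hr⟩

lemma inner {R : Q → A → Prop} {x : X} {qs' as}
    (hI : Interrogation (τ₁ x) R qs' as) :
    ∀ {qs ans ys}, Interrogation (tree τ₁ τ₂ i) R qs ans →
      After τ₁ τ₂ i ans (ys, some (x, [])) →
      Interrogation (tree τ₁ τ₂ i) R (qs ++ qs') (ans ++ as) ∧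
      After τ₁ τ₂ i (ans ++ as) (ys, some (x, as)) := by
  induction hI with
  | nil => intro qs ans ys h ha; simpa using ⟨h, ha⟩
  | @step qs' as q a h hq hr ih =>
    intro qs ans ys h ha
    obtain ⟨hI', ha'⟩ := ih h ha
    have hmem : Sum.inl q ∈ tree τ₁ τ₂ i (ans ++ as) :=
      mem_tree.2 ⟨(ys, some (x, as)), ha', Or.inr ⟨ys, x, as, q, rfl, rfl, hq⟩⟩
    constructor
    · rw [← List.append_assoc, ← List.append_assoc]
      exact hI'.step hmem hr
    · rw [← List.append_assoc]
      exact After.step ha' hq Relation.ReflTransGen.refl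

lemma fwd {R : Q → A → Prop} {S : X → Y → Prop} {xs ys}
    (hS : ∀ x y, S x y → ∃ qs as, Interrogation (τ₁ x) R qs as ∧ Sum.inr y ∈ τ₁ x as)
    (hI : Interrogation (τ₂ i) S xs ys) :
    ∃ qs ans, Interrogation (tree τ₁ τ₂ i) R qs ans ∧ After τ₁ τ₂ i ans (ys, none) := by
  induction hI with
  | nil => exact ⟨[], [], Interrogation.nil, After.start Relation.ReflTransGen.refl⟩
  | @step xs ys x y h hx hxy ih =>
    obtain ⟨qs, ans, hI0, ha0⟩ := ih
    have ha1 : After τ₁ τ₂ i ans (ys, some (x, [])) :=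
      after_reach ha0 (Relation.ReflTransGen.single (Step.ask hx))
    obtain ⟨qs', as, hI1, hy⟩ := hS x y hxy
    obtain ⟨hI2, ha2⟩ := inner hI1 hI0 ha1
    exact ⟨qs ++ qs', ans ++ as, hI2,
      after_reach ha2 (Relation.ReflTransGen.single (Step.ret hy))⟩

def Good (τ₁ : X → List A → Part (Q ⊕ Y)) (τ₂ : I → List Y → Part (X ⊕ O)) (i : I)
    (R : Q → A → Prop) (S : X → Y → Prop) (s : List Y × Option (X × List A)) : Prop :=
  (∃ xs, Interrogation (τ₂ i) S xs s.1) ∧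
  ∀ x as, s.2 = some (x, as) →
    Sum.inl x ∈ τ₂ i s.1 ∧ ∃ qs', Interrogation (τ₁ x) R qs' as

lemma good_step {R : Q → A → Prop} {S : X → Y → Prop} {s s'}
    (hS : ∀ x y, (∃ qs as, Interrogation (τ₁ x) R qs as ∧ Sum.inr y ∈ τ₁ x as) → S x y)
    (hg : Good τ₁ τ₂ i R S s) (h : Step τ₁ τ₂ i s s') : Good τ₁ τ₂ i R S s' := by
  cases h with
  | @ask ys x hx =>
    refine ⟨hg.1, ?_⟩
    rintro x' as' h'
    simp only [Option.some.injEq, Prod.mk.injEq] at h'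
    obtain ⟨rfl, rfl⟩ := h'
    exact ⟨hx, [], Interrogation.nil⟩
  | @ret ys x as y hy =>
    obtain ⟨⟨xs, hxs⟩, h2⟩ := hg
    obtain ⟨hx, qs', hqs'⟩ := h2 x as rfl
    refine ⟨⟨xs ++ [x], hxs.step hx (hS x y ⟨qs', as, hqs', hy⟩)⟩, ?_⟩
    rintro x' as' h'
    simp at h'

lemma good_reach {R : Q → A → Prop} {S : X → Y → Prop} {s s'}
    (hS : ∀ x y, (∃ qs as, Interrogation (τ₁ x) R qs as ∧ Sum.inr y ∈ τ₁ x as) → S x y)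
    (hg : Good τ₁ τ₂ i R S s) (h : Reach τ₁ τ₂ i s s') : Good τ₁ τ₂ i R S s' := by
  induction h with
  | refl => exact hg
  | tail _ hstep ih => exact good_step hS ih hstep

lemma bwd {R : Q → A → Prop} {S : X → Y → Prop}
    (hS : ∀ x y, (∃ qs as, Interrogation (τ₁ x) R qs as ∧ Sum.inr y ∈ τ₁ x as) → S x y)
    {qs ans} (hI : Interrogation (tree τ₁ τ₂ i) R qs ans) :
    ∀ s, After τ₁ τ₂ i ans s → Good τ₁ τ₂ i R S s := by
  induction hI with
  | nil =>
    intro s hs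
    rcases after_inv hs with ⟨-, h0⟩ | ⟨ans₀, a, ys, x, as, q, habs, -⟩
    · refine good_reach hS ⟨⟨[], Interrogation.nil⟩, ?_⟩ h0
      rintro x as ⟨⟩
    · simp at habs
  | @step qs ans q a hI0 hq hR ih =>
    intro s hs
    rcases after_inv hs with ⟨habs, -⟩ | ⟨ans₀, a', ys, x, as, q', heq, h0, hq', hr⟩
    · simp at habs
    · obtain ⟨rfl, ha⟩ := List.append_inj' heq rfl
      have ha' : a = a' := by simpa using ha
      subst ha'
      have hg := ih _ h0
      obtain ⟨s', ha', hf'⟩ := mem_tree.1 hq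
      have hfw : Final τ₁ τ₂ i (ys, some (x, as)) (Sum.inl q') :=
        Or.inr ⟨ys, x, as, q', rfl, rfl, hq'⟩
      have hss : s' = (ys, some (x, as)) := by
        rcases after_comparable ha' h0 with h | h
        · exact (reach_final hf' h).symm
        · exact reach_final hfw h
      subst hss
      rcases hf' with ⟨ys1, o1, heq1, -⟩ | ⟨ys1, x1, as1, q1, heq1, hqeq1, hmem1⟩
      · simp [Prod.ext_iff] at heq1
      · obtain ⟨rfl, hx1, has1⟩ : ys = ys1 ∧ x = x1 ∧ as = as1 := by
          simpa [Prod.ext_iff] using heq1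
        subst hx1; subst has1
        injection hqeq1 with hq1
        subst hq1
        obtain ⟨hout, hin⟩ := hg
        obtain ⟨hx2, qs2, hqs2⟩ := hin x as rfl
        have hentry : Good τ₁ τ₂ i R S (ys, some (x, as ++ [a])) := by
          refine ⟨hout, ?_⟩
          rintro x' as' h'
          simp only [Option.some.injEq, Prod.mk.injEq] at h'
          obtain ⟨rfl, rfl⟩ := h'
          exact ⟨hx2, qs2 ++ [q], hqs2.step hmem1 hR⟩
        exact good_reach hS hentry hr

end CompAux

theorem computable_comp' {Q A X Y I O : Type*}
    (F₁ : (Q → A → Prop) → X → Y → Prop)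
    (F₂ : (X → Y → Prop) → I → O → Prop)
    (h₁ : ∃ τ : X → List A → Part (Q ⊕ Y),
      ∀ R x y, F₁ R x y ↔ ∃ qs ans, Interrogation (τ x) R qs ans ∧ Sum.inr y ∈ τ x ans)
    (h₂ : ∃ τ : I → List Y → Part (X ⊕ O),
      ∀ S i o, F₂ S i o ↔ ∃ qs ans, Interrogation (τ i) S qs ans ∧ Sum.inr o ∈ τ i ans) :
    ∃ τ : I → List A → Part (Q ⊕ O),
      ∀ R i o, F₂ (F₁ R) i o ↔ ∃ qs ans, Interrogation (τ i) R qs ans ∧ Sum.inr o ∈ τ i ans := by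
  obtain ⟨τ₁, hτ₁⟩ := h₁
  obtain ⟨τ₂, hτ₂⟩ := h₂
  refine ⟨fun i ans => CompAux.tree τ₁ τ₂ i ans, fun R i o => ?_⟩
  rw [hτ₂ (F₁ R) i o]
  constructor
  · rintro ⟨xs, ys, hI, ho⟩
    obtain ⟨qs, ans, hIt, ha⟩ := CompAux.fwd (fun x y hxy => (hτ₁ R x y).1 hxy) hI
    exact ⟨qs, ans, hIt, CompAux.mem_tree.2 ⟨(ys, none), ha, Or.inl ⟨ys, o, rfl, rfl, ho⟩⟩⟩
  · rintro ⟨qs, ans, hIt, ho⟩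
    obtain ⟨s, ha, hf⟩ := CompAux.mem_tree.1 ho
    rcases hf with ⟨ys, o', heq, hoeq, hmem⟩ | ⟨ys, x, as, q, heq, habs, -⟩
    · subst heq
      injection hoeq with h; subst h
      have hg := CompAux.bwd (S := F₁ R) (fun x y hxy => (hτ₁ R x y).2 hxy) hIt _ ha
      obtain ⟨⟨xs, hxs⟩, -⟩ := hg
      exact ⟨xs, ys, hxs, hmem⟩
    · exact absurd habs (by simp)


theorem computable_comp {Q A X Y I O : Type*}
    (F₁ : (Q → A → Prop) → X → Y → Prop)
    (F₂ : (X → Y → Prop) → I → O → Prop)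
    (h₁ : OracleComputable F₁) (h₂ : OracleComputable F₂) :
    OracleComputable (fun (R : Q → A → Prop) (i : I) (o : O) => F₂ (F₁ R) i o) :=
  computable_comp' F₁ F₂ h₁ h₂
end

section
/- Every computable functional has a computational core: if F maps relations R : Q → A → Prop to relations of type I → O → Prop and F is computable, then there is a function f : (Q ⇀ A) → (I ⇀ O) such that for every partial function r : Q ⇀ A and every relation R with (∀ q a, R q a ↔ r q ▷ a), we have ∀ i o, F R i o ↔ f r i ▷ o. -/
theorem interrog_prefix {Q A O : Type*} {σ : List A → Part (Q ⊕ O)} {R : Q → A → Prop}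
    (hfun : ∀ q a a', R q a → R q a' → a = a') :
    ∀ {qs' ans'}, Interrogation σ R qs' ans' →
    ∀ {qs ans}, Interrogation σ R qs ans → ans.length ≤ ans'.length → ans <+: ans' := by
  intro qs' ans' h2
  induction h2 with
  | nil =>
    intro qs ans h1 hle
    have : ans = [] := List.length_eq_zero_iff.mp (Nat.le_zero.mp hle)
    simp [this]
  | @step qs2 ans2 q2 a2 h2 hq2 ha2 ih =>
    intro qs ans h1 hle
    simp at hle
    by_cases hc : ans.length ≤ ans2.length
    · exact (ih h1 hc).trans (List.prefix_append _ _)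
    · have hlen : ans.length = ans2.length + 1 := by omega
      cases h1 with
      | nil => simp at hlen
      | @step qs0 ans0 q0 a0 h0 hq0 ha0 =>
        have hlen0 : ans0.length = ans2.length := by simpa using hlen
        have hpre : ans0 = ans2 :=
          (ih h0 (le_of_eq hlen0)).eq_of_length hlen0
        subst hpre
        have hqq : q0 = q2 := by
          have := Part.mem_unique hq0 hq2
          exact Sum.inl.inj this
        subst hqq
        have : a0 = a2 := hfun q0 a0 a2 ha0 ha2
        subst this
        exact List.prefix_refl _

theorem interrog_mid {Q A O : Type*} {σ : List A → Part (Q ⊕ O)} {R : Q → A → Prop} :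
    ∀ {qs' ans'}, Interrogation σ R qs' ans' →
    ∀ {ans : List A}, ans <+: ans' → ans ≠ ans' → ∃ q, Sum.inl q ∈ σ ans := by
  intro qs' ans' h2
  induction h2 with
  | nil =>
    intro ans hp hne
    exact absurd (List.prefix_nil.mp hp) hne
  | @step qs2 ans2 q2 a2 h2 hq2 ha2 ih =>
    intro ans hp hne
    by_cases hc : ans.length ≤ ans2.length
    · have hp2 : ans <+: ans2 :=
        List.prefix_of_prefix_length_le hp (List.prefix_append _ _) hc
      by_cases he : ans = ans2
      · subst he; exact ⟨q2, hq2⟩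
      · exact ih hp2 he
    · have : ans = ans2 ++ [a2] := by
        have hlen := hp.length_le
        simp at hlen
        exact hp.eq_of_length (by simp; omega)
      exact absurd this hne



theorem interrog_out_unique {Q A O : Type*} {σ : List A → Part (Q ⊕ O)} {R : Q → A → Prop}
    (hfun : ∀ q a a', R q a → R q a' → a = a') {qs qs' : List Q} {ans ans' : List A} {o o' : O}
    (h1 : Interrogation σ R qs ans) (ho1 : Sum.inr o ∈ σ ans)
    (h2 : Interrogation σ R qs' ans') (ho2 : Sum.inr o' ∈ σ ans') : o = o' := by
  rcases le_total ans.length ans'.length with hle | hle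
  · have hp := interrog_prefix hfun h2 h1 hle
    by_cases he : ans = ans'
    · subst he; exact Sum.inr.inj (Part.mem_unique ho1 ho2)
    · obtain ⟨q, hq⟩ := interrog_mid h2 hp he
      exact absurd (Part.mem_unique hq ho1) (by simp)
  · have hp := interrog_prefix hfun h1 h2 hle
    by_cases he : ans' = ans
    · subst he; exact Sum.inr.inj (Part.mem_unique ho1 ho2)
    · obtain ⟨q, hq⟩ := interrog_mid h1 hp he
      exact absurd (Part.mem_unique hq ho2) (by simp)


theorem Turing_transports_computable {Q A I O : Type*}
    (F : (Q → A → Prop) → I → O → Prop) (hF : OracleComputable F) :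
    ∃ f : (Q → Part A) → I → Part O,
      ∀ (r : Q → Part A) (R : Q → A → Prop),
        (∀ q a, R q a ↔ a ∈ r q) → ∀ i o, F R i o ↔ o ∈ f r i := by
  obtain ⟨τ, hτ⟩ := hF
  refine ⟨fun r i => ⟨∃ u, F (fun q a => a ∈ r q) i u, fun h => h.choose⟩, ?_⟩
  intro r R hR i o
  have hRe : R = fun q a => a ∈ r q := by
    funext q a; exact propext (hR q a)
  subst hRe
  have hfun : ∀ q a a', a ∈ r q → a' ∈ r q → a = a' := fun q a a' h h' => Part.mem_unique h h'
  have huniq : ∀ o₁ o₂, F (fun q a => a ∈ r q) i o₁ → F (fun q a => a ∈ r q) i o₂ → o₁ = o₂ := by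
    intro o₁ o₂ h₁ h₂
    obtain ⟨qs, ans, hi, ho⟩ := (hτ _ i o₁).mp h₁
    obtain ⟨qs', ans', hi', ho'⟩ := (hτ _ i o₂).mp h₂
    exact interrog_out_unique hfun hi ho hi' ho'
  constructor
  · intro h
    have hd : ∃ u, F (fun q a => a ∈ r q) i u := ⟨o, h⟩
    exact ⟨hd, huniq _ _ hd.choose_spec h⟩
  · rintro ⟨hd, rfl⟩
    exact hd.choose_spec
end

section
/- Oracle semi-decidability is transported along Turing reductions of the oracle: if p is oracle-semi-decidable relative to q and q ⪯_T q', then p is oracle-semi-decidable relative to q'. -/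
section Compose

variable {Y Y' : Type*}

/-- Simulation configuration: answers fed to the outer tree so far, and optionally a
current inner run (question `y` with inner answers so far). -/
abbrev Cfg (Y : Type*) := List Bool × Option (Y × List Bool)

variable (τ' : List Bool → Part (Y ⊕ Unit)) (σ : Y → List Bool → Part (Y' ⊕ Bool))

/-- Silent evaluation of the composite machine until it outputs or asks a question. -/
inductive Reaches : Cfg Y → ((Y' × Cfg Y) ⊕ Unit) → Prop
  | doneTop {bs} : Sum.inr () ∈ τ' bs → Reaches (bs, none) (.inr ())
  | doneSub {bs y cs y'} : Sum.inl y' ∈ σ y cs →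
      Reaches (bs, some (y, cs)) (.inl (y', (bs, some (y, cs))))
  | stepTop {bs y r} : Sum.inl y ∈ τ' bs → Reaches (bs, some (y, [])) r →
      Reaches (bs, none) r
  | stepSub {bs y cs b r} : Sum.inr b ∈ σ y cs → Reaches (bs ++ [b], none) r →
      Reaches (bs, some (y, cs)) r

lemma Reaches_det {c r r'} (h : Reaches τ' σ c r) (h' : Reaches τ' σ c r') : r = r' := by
  induction h generalizing r' with
  | doneTop hm =>
    cases h' with
    | doneTop hm' => rfl
    | stepTop hm' h2 => exact absurd (Part.mem_unique hm hm') (by simp)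
  | doneSub hm =>
    cases h' with
    | doneSub hm' => have := Part.mem_unique hm hm'; simp_all
    | stepSub hm' h2 => exact absurd (Part.mem_unique hm hm') (by simp)
  | stepTop hm h2 ih =>
    cases h' with
    | doneTop hm' => exact absurd (Part.mem_unique hm hm') (by simp)
    | stepTop hm' h2' =>
      have hy := Part.mem_unique hm hm'
      injection hy with hy
      subst hy
      exact ih h2'
  | stepSub hm h2 ih =>
    cases h' with
    | doneSub hm' => exact absurd (Part.mem_unique hm hm') (by simp)
    | stepSub hm' h2' =>
      have hb := Part.mem_unique hm hm'
      injection hb with hb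
      subst hb
      exact ih h2'

noncomputable def evalc (c : Cfg Y) : Part ((Y' × Cfg Y) ⊕ Unit) :=
  ⟨∃ r, Reaches τ' σ c r, fun h => h.choose⟩

lemma mem_evalc {c r} : r ∈ evalc τ' σ c ↔ Reaches τ' σ c r := by
  constructor
  · rintro ⟨h, rfl⟩; exact h.choose_spec
  · intro h
    exact ⟨⟨r, h⟩, Reaches_det τ' σ (⟨r, h⟩ : ∃ r, Reaches τ' σ c r).choose_spec h⟩

lemma evalc_eq {c r} (h : Reaches τ' σ c r) : evalc τ' σ c = Part.some r :=
  Part.eq_some_iff.mpr ((mem_evalc τ' σ).mpr h)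

/-- The composite tree (from configuration `c`), consuming a list of outer oracle answers. -/
noncomputable def go : Cfg Y → List Bool → Part (Y' ⊕ Unit)
  | c, [] => (evalc τ' σ c).map (fun r => match r with
      | .inl (y', _) => .inl y'
      | .inr _ => .inr ())
  | c, a :: l => (evalc τ' σ c).bind (fun r => match r with
      | .inl (_, c') => go (c'.1, c'.2.map fun p => (p.1, p.2 ++ [a])) l
      | .inr _ => Part.none)

lemma go_congr {c c₂} (h : ∀ r, Reaches τ' σ c r ↔ Reaches τ' σ c₂ r) (l : List Bool) :
    go τ' σ c l = go τ' σ c₂ l := by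
  have he : evalc τ' σ c = evalc τ' σ c₂ := Part.ext fun r => by
    rw [mem_evalc, mem_evalc]; exact h r
  cases l <;> simp [go, he]

lemma reaches_top_iff {bs y} (hm : Sum.inl y ∈ τ' bs) (r) :
    Reaches τ' σ (bs, none) r ↔ Reaches τ' σ (bs, some (y, [])) r := by
  constructor
  · intro h
    cases h with
    | doneTop hm' => exact absurd (Part.mem_unique hm hm') (by simp)
    | stepTop hm' h2 =>
      have hy := Part.mem_unique hm hm'
      injection hy with hy
      subst hy
      exact h2
  · exact Reaches.stepTop hm

lemma reaches_sub_iff {bs y cs b} (hm : Sum.inr b ∈ σ y cs) (r) :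
    Reaches τ' σ (bs, some (y, cs)) r ↔ Reaches τ' σ (bs ++ [b], none) r := by
  constructor
  · intro h
    cases h with
    | doneSub hm' => exact absurd (Part.mem_unique hm hm') (by simp)
    | stepSub hm' h2 =>
      have hb := Part.mem_unique hm hm'
      injection hb with hb
      subst hb
      exact h2
  · exact Reaches.stepSub hm

variable (R : Y → Bool → Prop) (R' : Y' → Bool → Prop)

lemma fwd_sub (hRσ : ∀ y b, R y b → ∃ us vs, Interrogation (σ y) R' us vs ∧ Sum.inr b ∈ σ y vs)
    {y us vs} (h : Interrogation (σ y) R' us vs) {bs qs' ans'}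
    (hint : Interrogation (go τ' σ ([], none)) R' qs' ans')
    (heq : ∀ l, go τ' σ ([], none) (ans' ++ l) = go τ' σ (bs, some (y, [])) l) :
    Interrogation (go τ' σ ([], none)) R' (qs' ++ us) (ans' ++ vs) ∧
      ∀ l, go τ' σ ([], none) (ans' ++ (vs ++ l)) = go τ' σ (bs, some (y, vs)) l := by
  induction h with
  | nil => exact ⟨by simpa using hint, fun l => by simpa using heq l⟩
  | @step us0 vs0 q a h1 h2 h3 ih =>
    obtain ⟨ih1, ih2⟩ := ih
    have hc : Reaches τ' σ (bs, some (y, vs0)) (.inl (q, (bs, some (y, vs0)))) :=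
      Reaches.doneSub h2
    have hq' : Sum.inl q ∈ go τ' σ ([], none) (ans' ++ vs0) := by
      have h4 := ih2 []
      rw [List.append_nil] at h4
      rw [h4]
      simp only [go]
      exact (Part.mem_map_iff _).mpr ⟨_, (mem_evalc τ' σ).mpr hc, rfl⟩
    refine ⟨?_, ?_⟩
    · have h5 := Interrogation.step ih1 hq' h3
      simpa [List.append_assoc] using h5
    · intro l
      have h5 := ih2 (a :: l)
      have h6 : ans' ++ ((vs0 ++ [a]) ++ l) = ans' ++ (vs0 ++ (a :: l)) := by simp
      rw [h6, h5]
      simp [go, evalc_eq τ' σ hc]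

lemma fwd (hRσ : ∀ y b, R y b → ∃ us vs, Interrogation (σ y) R' us vs ∧ Sum.inr b ∈ σ y vs)
    {qs ans} (h : Interrogation τ' R qs ans) :
    ∃ qs' ans', Interrogation (go τ' σ ([], none)) R' qs' ans' ∧
      ∀ l, go τ' σ ([], none) (ans' ++ l) = go τ' σ (ans, none) l := by
  induction h with
  | nil => exact ⟨[], [], Interrogation.nil, fun l => by simp⟩
  | @step qs0 ans0 y b h1 h2 h3 ih =>
    obtain ⟨qs', ans', hint, heq⟩ := ih
    obtain ⟨us, vs, hσi, hσo⟩ := hRσ y b h3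
    have heq' : ∀ l, go τ' σ ([], none) (ans' ++ l) = go τ' σ (ans0, some (y, [])) l :=
      fun l => (heq l).trans (go_congr τ' σ (reaches_top_iff τ' σ h2) l)
    obtain ⟨h4, h5⟩ := fwd_sub τ' σ R R' hRσ hσi hint heq'
    refine ⟨qs' ++ us, ans' ++ vs, h4, fun l => ?_⟩
    have h6 : (ans' ++ vs) ++ l = ans' ++ (vs ++ l) := by simp
    rw [h6, h5 l]
    exact go_congr τ' σ (reaches_sub_iff τ' σ hσo) l

def Good : Cfg Y → Prop := fun c =>
  match c with
  | (bs, none) => ∃ qs, Interrogation τ' R qs bs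
  | (bs, some (y, cs)) => (∃ qs, Interrogation τ' R qs bs) ∧ Sum.inl y ∈ τ' bs ∧
      ∃ us, Interrogation (σ y) R' us cs

lemma back (hRσ' : ∀ y b, (∃ us vs, Interrogation (σ y) R' us vs ∧ Sum.inr b ∈ σ y vs) → R y b)
    {c r} (h : Reaches τ' σ c r) (hg : Good τ' σ R R' c) :
    (r = .inr () ∧ ∃ qs ans, Interrogation τ' R qs ans ∧ Sum.inr () ∈ τ' ans) ∨
      (∃ y' bs y cs, r = .inl (y', (bs, some (y, cs))) ∧ Sum.inl y' ∈ σ y cs ∧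
        Good τ' σ R R' (bs, some (y, cs))) := by
  induction h with
  | @doneTop bs hm =>
    obtain ⟨qs, hqs⟩ := hg
    exact Or.inl ⟨rfl, qs, bs, hqs, hm⟩
  | @doneSub bs y cs y' hm =>
    exact Or.inr ⟨y', bs, y, cs, rfl, hm, hg⟩
  | @stepTop bs y r hm h2 ih =>
    exact ih ⟨hg, hm, [], Interrogation.nil⟩
  | @stepSub bs y cs b r hm h2 ih =>
    obtain ⟨⟨qs, hqs⟩, hy, us, hus⟩ := hg
    have hRyb : R y b := hRσ' y b ⟨us, cs, hus, hm⟩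
    exact ih ⟨qs ++ [y], hqs.step hy hRyb⟩

lemma bwd (hRσ' : ∀ y b, (∃ us vs, Interrogation (σ y) R' us vs ∧ Sum.inr b ∈ σ y vs) → R y b)
    {qs' ans'} (h : Interrogation (go τ' σ ([], none)) R' qs' ans') :
    ∃ c, Good τ' σ R R' c ∧ ∀ l, go τ' σ ([], none) (ans' ++ l) = go τ' σ c l := by
  induction h with
  | nil => exact ⟨([], none), ⟨[], Interrogation.nil⟩, fun l => by simp⟩
  | @step qs0 ans0 q a h1 h2 h3 ih =>
    obtain ⟨c, hg, heq⟩ := ih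
    have h2' : Sum.inl q ∈ go τ' σ c [] := by
      have h4 := heq []
      rw [List.append_nil] at h4
      rwa [h4] at h2
    simp only [go] at h2'
    obtain ⟨r, hr, hfr⟩ := (Part.mem_map_iff _).mp h2'
    have hr' : Reaches τ' σ c r := (mem_evalc τ' σ).mp hr
    rcases back τ' σ R R' hRσ' hr' hg with ⟨rfl, _⟩ | ⟨y', bs, y, cs, rfl, hσl, hg2⟩
    · simp at hfr
    · have hy'q : y' = q := by simpa using hfr
      obtain ⟨hg1, hgy, us, hus⟩ := hg2
      refine ⟨(bs, some (y, cs ++ [a])),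
        ⟨hg1, hgy, us ++ [q], hus.step (hy'q ▸ hσl) h3⟩, fun l => ?_⟩
      have h5 := heq (a :: l)
      have h6 : (ans0 ++ [a]) ++ l = ans0 ++ (a :: l) := by simp
      rw [h6, h5]
      simp [go, evalc_eq τ' σ hr']

end Compose

theorem Turing_transports_sdec {X Y Y' : Type*} (p : X → Prop) (q : Y → Prop)
    (q' : Y' → Prop) (hp : OracleSemiDec q p) (hq : TuringRed q q') :
    OracleSemiDec q' p := by
  obtain ⟨F, ⟨τ, hτ⟩, hpF⟩ := hp
  obtain ⟨G, ⟨σ0, hσ0⟩, hqG⟩ := hq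
  refine ⟨fun R' x _ => ∃ qs' ans', Interrogation (go (τ x) σ0 ([], none)) R' qs' ans' ∧
      Sum.inr () ∈ go (τ x) σ0 ([], none) ans', ⟨fun x => go (τ x) σ0 ([], none), ?_⟩, ?_⟩
  · intro R i o; cases o; exact Iff.rfl
  · intro x
    rw [hpF x, hτ]
    have hRσ : ∀ y b, charRel q y b →
        ∃ us vs, Interrogation (σ0 y) (charRel q') us vs ∧ Sum.inr b ∈ σ0 y vs :=
      fun y b hb => (hσ0 (charRel q') y b).mp ((hqG y b).mp hb)
    have hRσ' : ∀ y b,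
        (∃ us vs, Interrogation (σ0 y) (charRel q') us vs ∧ Sum.inr b ∈ σ0 y vs) →
        charRel q y b :=
      fun y b hb => (hqG y b).mpr ((hσ0 (charRel q') y b).mpr hb)
    constructor
    · rintro ⟨qs, ans, hint, hout⟩
      obtain ⟨qs', ans', h1, h2⟩ := fwd (τ x) σ0 (charRel q) (charRel q') hRσ hint
      refine ⟨qs', ans', h1, ?_⟩
      have h3 := h2 []
      rw [List.append_nil] at h3
      rw [h3]
      simp only [go]
      exact (Part.mem_map_iff _).mpr
        ⟨.inr (), (mem_evalc (τ x) σ0).mpr (Reaches.doneTop hout), rfl⟩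
    · rintro ⟨qs', ans', hint, hout⟩
      obtain ⟨c, hg, heq⟩ := bwd (τ x) σ0 (charRel q) (charRel q') hRσ' hint
      have h3 := heq []
      rw [List.append_nil] at h3
      rw [h3] at hout
      simp only [go] at hout
      obtain ⟨r, hr, hfr⟩ := (Part.mem_map_iff _).mp hout
      rcases back (τ x) σ0 (charRel q) (charRel q') hRσ' ((mem_evalc (τ x) σ0).mp hr) hg with
        ⟨rfl, h⟩ | ⟨y', bs, y, cs, rfl, _, _⟩
      · exact h
      · simp at hfr
end

section
/- Turing reducibility forms an upper semilattice: for p : X → Prop and q : Y → Prop, define p + q : X ⊕ Y → Prop by (p + q)(Sum.inl x) := p x and (p + q)(Sum.inr y) := q y. Then p ⪯_T p + q, q ⪯_T p + q, and for every predicate r (on any type), if p ⪯_T r and q ⪯_T r then p + q ⪯_T r. -/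
private lemma interrog_nil_right {Q A O : Type*} {σ : List A → Part (Q ⊕ O)}
    {R : Q → A → Prop} {qs : List Q} (h : Interrogation σ R qs ([] : List A)) :
    qs = [] := by
  generalize hans : ([] : List A) = ans at h
  cases h with
  | nil => rfl
  | step h₁ h₂ h₃ => simp at hans

private lemma interrog_single {Q A O : Type*} {σ : List A → Part (Q ⊕ O)}
    {R : Q → A → Prop} {qs : List Q} {a : A} (h : Interrogation σ R qs [a]) :
    ∃ q, qs = [q] ∧ Sum.inl q ∈ σ [] ∧ R q a := by
  generalize hans : [a] = ans at h
  cases h with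
  | nil => simp at hans
  | step h₁ h₂ h₃ =>
    rename_i qs' ans' q' a'
    have hnil : ans' = [] := by
      have := congrArg List.length hans
      simp at this
      exact this
    subst hnil
    have ha : a' = a := by simpa using hans.symm
    subst ha
    have := interrog_nil_right h₁
    subst this
    exact ⟨q', rfl, h₂, h₃⟩

private lemma comp_query {Q A I : Type*} (g : I → Q) :
    OracleComputable (fun (R : Q → A → Prop) (i : I) (o : A) => R (g i) o) := by
  refine ⟨fun i ans => match ans with
    | [] => Part.some (Sum.inl (g i))
    | [a] => Part.some (Sum.inr a)
    | _ :: _ :: _ => Part.none, fun R i o => ?_⟩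
  constructor
  · intro h
    exact ⟨[g i], [o],
      Interrogation.step Interrogation.nil (by simp [Part.mem_some_iff]) h,
      by simp [Part.mem_some_iff]⟩
  · rintro ⟨qs, ans, hint, ho⟩
    match ans with
    | [] => simp [Part.mem_some_iff] at ho
    | [a] =>
      simp only [Part.mem_some_iff] at ho
      obtain ⟨q', hq', hmem, hR⟩ := interrog_single hint
      simp only [Part.mem_some_iff] at hmem
      cases hmem
      cases ho
      exact hR
    | _ :: _ :: _ => simp [Part.notMem_none] at ho

theorem Turing_upper_semi_lattice {X Y : Type*} (p : X → Prop) (q : Y → Prop) :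
    TuringRed p (Sum.elim p q) ∧ TuringRed q (Sum.elim p q) ∧
    ∀ (Z : Type*) (r : Z → Prop), TuringRed p r → TuringRed q r →
      TuringRed (Sum.elim p q) r := by
  refine ⟨?_, ?_, ?_⟩
  · exact ⟨fun R x b => R (Sum.inl x) b, comp_query Sum.inl,
      fun x b => by cases b <;> simp [charRel]⟩
  · exact ⟨fun R y b => R (Sum.inr y) b, comp_query Sum.inr,
      fun y b => by cases b <;> simp [charRel]⟩
  · rintro Z r ⟨Fp, ⟨τp, hτp⟩, hp⟩ ⟨Fq, ⟨τq, hτq⟩, hq⟩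
    refine ⟨fun R i o => Sum.elim (fun x => Fp R x o) (fun y => Fq R y o) i,
      ⟨fun i => Sum.elim τp τq i, fun R i o => ?_⟩, fun i b => ?_⟩
    · cases i with
      | inl x => simpa using hτp R x o
      | inr y => simpa using hτq R y o
    · cases i with
      | inl x => simpa [charRel] using hp x b
      | inr y => simpa [charRel] using hq y b
end
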